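/- Let Y be a nonempty finite set and let M₁, …, M_n : Y × Y → ℝ be rate matrices, i.e. M_k(y,y') ≥ 0 for y ≠ y' and each column of M_k sums to zero. Let h > 0 satisfy h·‖M_k‖₁ ≤ 1 for every k, where ‖M‖₁ is the maximum absolute column sum. Let μ₀ be a probability vector on Y and define recursively μ^{Eu}_k := (I + h M_k)·μ^{Eu}_{k−1} and μ^{EI}_k := exp(h M_k)·μ^{EI}_{k−1} with μ^{Eu}_0 = μ^{EI}_0 = μ₀. Then every μ^{Eu}_k and μ^{EI}_k is a probability vector, and the total variation distance between the Euler and exponential-integrator samplers after n steps satisfies (1/2) ∑_{y∈Y} |μ^{Eu}_n(y) − μ^{EI}_n(y)| ≤ ∑_{k=1}^{n} (h·‖M_k‖₁)². -/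

import Mathlib

open Matrix Finset

/-- The matrix 1-norm: maximum absolute column sum. -/
noncomputable def colNorm {Y : Type*} [Fintype Y] [Nonempty Y]
    (M : Matrix Y Y ℝ) : ℝ :=
  Finset.univ.sup' Finset.univ_nonempty fun y' => ∑ y, |M y y'|

/-- A probability vector on a finite set. -/
def IsProbVec {Y : Type*} [Fintype Y] (p : Y → ℝ) : Prop :=
  (∀ y, 0 ≤ p y) ∧ ∑ y, p y = 1

/-!
`colNorm` is the operator norm on `ℓ¹`. For a rate matrix `A` with `colNorm A ≤ 1`, both `1 + A`
and `exp A` are column-stochastic, so both samplers stay probability vectors and `1 + A` is an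
`ℓ¹` contraction. Since `(1 + A) u - exp A v = (1 + A) (u - v) + (1 + A - exp A) v`, each step
adds at most `colNorm (exp A - 1 - A)` to the `ℓ¹` distance, and comparing the exponential series
termwise with that of `Real.exp (colNorm A)` bounds this by `colNorm A ^ 2`. The `ℓ¹` distance is
twice the total variation distance.
-/

open NormedSpace
open scoped Nat

theorem norm_exp_sub_one_sub_le_sq {𝔸 : Type*} [NormedRing 𝔸] [NormedAlgebra ℝ 𝔸]
    [CompleteSpace 𝔸] {x : 𝔸} (hx : ‖x‖ ≤ 1) : ‖exp x - 1 - x‖ ≤ ‖x‖ ^ 2 := by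
  have hsum : HasSum (fun n => ((n + 2)! : ℝ)⁻¹ • x ^ (n + 2)) (exp x - 1 - x) := by
    simpa [Finset.sum_range_succ, sub_sub] using
      (hasSum_nat_add_iff' 2).mpr (exp_series_hasSum_exp' (𝕂 := ℝ) x)
  have hsum_norm : HasSum (fun n => ((n + 2)! : ℝ)⁻¹ * ‖x‖ ^ (n + 2))
      (Real.exp ‖x‖ - 1 - ‖x‖) := by
    simpa [Finset.sum_range_succ, sub_sub, Real.exp_eq_exp_ℝ] using
      (hasSum_nat_add_iff' 2).mpr (exp_series_hasSum_exp' (𝕂 := ℝ) ‖x‖)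
  calc ‖exp x - 1 - x‖ ≤ Real.exp ‖x‖ - 1 - ‖x‖ :=
        hsum.norm_le_of_bounded hsum_norm fun n => by
          rw [norm_smul, norm_inv, Real.norm_natCast]
          gcongr
          exact norm_pow_le' x (by omega)
    _ ≤ ‖x‖ ^ 2 := by
        simpa using (le_abs_self _).trans (Real.abs_exp_sub_one_sub_id_le (by rwa [abs_norm]))

attribute [local instance] Matrix.linftyOpNormedAddCommGroup Matrix.linftyOpNormedRing
  Matrix.linftyOpNormedAlgebra Matrix.linftyOpNormedSpace

section ColNorm

variable {Y : Type*} [Fintype Y] [Nonempty Y]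

/-- Mathlib's `linftyOp` norm is the maximal absolute row sum, hence the transpose. -/
theorem colNorm_eq_norm_transpose (A : Matrix Y Y ℝ) : colNorm A = ‖Aᵀ‖ := by
  rw [linfty_opNorm_def, ← sup'_eq_sup univ_nonempty,
    apply_sup'_eq_sup'_comp _ _ NNReal.coe_max]
  simp only [colNorm, Function.comp_def, NNReal.coe_sum, coe_nnnorm, transpose_apply,
    Real.norm_eq_abs]

theorem sum_abs_le_colNorm (A : Matrix Y Y ℝ) (j : Y) : ∑ i, |A i j| ≤ colNorm A :=
  le_sup' (fun j => ∑ i, |A i j|) (mem_univ j)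

theorem abs_le_colNorm (A : Matrix Y Y ℝ) (i j : Y) : |A i j| ≤ colNorm A :=
  (single_le_sum (fun k _ => abs_nonneg (A k j)) (mem_univ i)).trans (sum_abs_le_colNorm A j)

theorem colNorm_le {A : Matrix Y Y ℝ} {c : ℝ} (h : ∀ j, ∑ i, |A i j| ≤ c) :
    colNorm A ≤ c :=
  sup'_le _ _ fun j _ => h j

theorem colNorm_smul (c : ℝ) (A : Matrix Y Y ℝ) : colNorm (c • A) = |c| * colNorm A := by
  rw [colNorm_eq_norm_transpose, colNorm_eq_norm_transpose, transpose_smul, norm_smul,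
    Real.norm_eq_abs]

theorem sum_abs_mulVec_le (A : Matrix Y Y ℝ) (v : Y → ℝ) :
    ∑ i, |(A *ᵥ v) i| ≤ colNorm A * ∑ i, |v i| := by
  have h := linfty_opNorm_mul (replicateRow Unit v) Aᵀ
  rw [← replicateRow_vecMul, vecMul_transpose, linfty_opNorm_replicateRow,
    linfty_opNorm_replicateRow, ← colNorm_eq_norm_transpose] at h
  simpa only [Real.norm_eq_abs, mul_comm] using h

theorem colNorm_one_add_sub_exp_le [DecidableEq Y] {A : Matrix Y Y ℝ} (hA : colNorm A ≤ 1) :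
    colNorm (1 + A - exp A) ≤ colNorm A ^ 2 := by
  rw [colNorm_eq_norm_transpose] at hA
  rw [colNorm_eq_norm_transpose, colNorm_eq_norm_transpose, transpose_sub, transpose_add,
    transpose_one, ← exp_transpose, ← norm_neg,
    show -(1 + Aᵀ - exp Aᵀ) = exp Aᵀ - 1 - Aᵀ by abel]
  exact norm_exp_sub_one_sub_le_sq hA

theorem colNorm_le_one_of_mem_colStochastic [DecidableEq Y] {S : Matrix Y Y ℝ}
    (hS : S ∈ colStochastic ℝ Y) : colNorm S ≤ 1 :=
  colNorm_le fun j => by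
    simp only [abs_of_nonneg (nonneg_of_mem_colStochastic hS), sum_col_of_mem_colStochastic hS,
      le_refl]

end ColNorm

section Exp

variable {Y : Type*} [Fintype Y] [DecidableEq Y]

theorem hasSum_exp_apply (A : Matrix Y Y ℝ) (i j : Y) :
    HasSum (fun n => (n !⁻¹ : ℝ) * (A ^ n) i j) (exp A i j) :=
  Pi.hasSum.mp (Pi.hasSum.mp (exp_series_hasSum_exp' (𝕂 := ℝ) A) i) j

theorem exp_apply_nonneg {B : Matrix Y Y ℝ} (hB : ∀ i j, 0 ≤ B i j) (i j : Y) :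
    0 ≤ exp B i j :=
  (hasSum_exp_apply B i j).nonneg fun n => mul_nonneg (by positivity) (pow_apply_nonneg hB n i j)

/-- Shifting by a multiple of the identity only rescales the exponential by a positive factor. -/
theorem exp_apply_nonneg_of_offDiag_nonneg {A : Matrix Y Y ℝ}
    (hA : ∀ i j, i ≠ j → 0 ≤ A i j) (i j : Y) : 0 ≤ exp A i j := by
  set c := ∑ k, |A k k|
  set B := A + c • 1
  have hB : ∀ i j, 0 ≤ B i j := fun i j => by
    by_cases hij : i = j
    · subst hij
      have hc : |A i i| ≤ c := single_le_sum (fun k _ => abs_nonneg (A k k)) (mem_univ i)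
      simpa [B, neg_le_iff_add_nonneg] using (neg_abs_le (A i i)).trans' (neg_le_neg hc)
    · simpa [B, hij] using hA i j hij
  have hexp : exp A = Real.exp (-c) • exp B := by
    have hAB : A = algebraMap ℝ _ (-c) + B := by simp [B, Algebra.algebraMap_eq_smul_one]
    conv_lhs => rw [hAB]
    rw [Matrix.exp_add_of_commute _ _ (Algebra.commute_algebraMap_left _ _), Real.exp_eq_exp_ℝ,
      Algebra.smul_def]
    exact congrArg (· * exp B) (algebraMap_exp_comm _).symm
  rw [hexp, Matrix.smul_apply, smul_eq_mul]
  exact mul_nonneg (Real.exp_pos _).le (exp_apply_nonneg hB i j)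

theorem sum_pow_apply_eq_zero {A : Matrix Y Y ℝ} (hA : ∀ j, ∑ i, A i j = 0) {n : ℕ}
    (hn : n ≠ 0) (j : Y) : ∑ i, (A ^ n) i j = 0 := by
  obtain ⟨n, rfl⟩ := Nat.exists_eq_add_one_of_ne_zero hn
  rw [pow_succ']
  simp only [mul_apply]
  rw [sum_comm]
  simp [← sum_mul, hA]

theorem sum_exp_apply {A : Matrix Y Y ℝ} (hA : ∀ j, ∑ i, A i j = 0) (j : Y) :
    ∑ i, exp A i j = 1 := by
  refine (hasSum_sum fun i _ => hasSum_exp_apply A i j).unique ?_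
  convert hasSum_single 0 fun n hn => ?_
  · simp [one_apply]
  · rw [← mul_sum, sum_pow_apply_eq_zero hA hn, mul_zero]

end Exp

section RateMatrix

variable {Y : Type*} [Fintype Y]

structure IsRateMatrix (A : Matrix Y Y ℝ) : Prop where
  offDiag_nonneg : ∀ i j, i ≠ j → 0 ≤ A i j
  sum_col : ∀ j, ∑ i, A i j = 0

theorem IsRateMatrix.smul {A : Matrix Y Y ℝ} (hA : IsRateMatrix A) {c : ℝ} (hc : 0 ≤ c) :
    IsRateMatrix (c • A) where
  offDiag_nonneg i j hij := mul_nonneg hc (hA.offDiag_nonneg i j hij)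
  sum_col j := by simp only [Matrix.smul_apply, smul_eq_mul, ← mul_sum, hA.sum_col, mul_zero]

variable [DecidableEq Y]

theorem IsRateMatrix.exp_mem_colStochastic {A : Matrix Y Y ℝ} (hA : IsRateMatrix A) :
    exp A ∈ colStochastic ℝ Y :=
  mem_colStochastic_iff_sum.2
    ⟨exp_apply_nonneg_of_offDiag_nonneg hA.offDiag_nonneg, sum_exp_apply hA.sum_col⟩

theorem IsRateMatrix.one_add_mem_colStochastic [Nonempty Y] {A : Matrix Y Y ℝ}
    (hA : IsRateMatrix A) (h1 : colNorm A ≤ 1) : 1 + A ∈ colStochastic ℝ Y := by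
  refine mem_colStochastic_iff_sum.2 ⟨fun i j => ?_, fun j => ?_⟩
  · by_cases hij : i = j
    · subst hij
      have hdiag : -1 ≤ A i i := (neg_le_neg h1).trans (neg_le_of_abs_le (abs_le_colNorm A i i))
      simpa [neg_le_iff_add_nonneg'] using hdiag
    · simpa [hij] using hA.offDiag_nonneg i j hij
  · simp [sum_add_distrib, hA.sum_col, one_apply]

end RateMatrix

section Iterates

variable {Y : Type*} [Fintype Y]

theorem IsProbVec.mulVec [DecidableEq Y] {S : Matrix Y Y ℝ} (hS : S ∈ colStochastic ℝ Y)
    {p : Y → ℝ} (hp : IsProbVec p) : IsProbVec (S *ᵥ p) :=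
  ⟨nonneg_mulVec_of_mem_colStochastic hS hp.1, (sum_mulVec_of_mem_colStochastic hS).trans hp.2⟩

theorem IsProbVec.sum_abs {p : Y → ℝ} (hp : IsProbVec p) : ∑ i, |p i| = 1 := by
  simp only [abs_of_nonneg (hp.1 _), hp.2]

variable [Nonempty Y] [DecidableEq Y]

theorem sum_abs_mulVec_sub_mulVec_le {S : Matrix Y Y ℝ} (hS : S ∈ colStochastic ℝ Y)
    (T : Matrix Y Y ℝ) (u v : Y → ℝ) :
    ∑ i, |(S *ᵥ u) i - (T *ᵥ v) i| ≤ ∑ i, |u i - v i| + colNorm (S - T) * ∑ i, |v i| :=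
  calc ∑ i, |(S *ᵥ u) i - (T *ᵥ v) i|
      = ∑ i, |(S *ᵥ (u - v)) i + ((S - T) *ᵥ v) i| := by
        simp only [mulVec_sub, sub_mulVec, Pi.sub_apply, sub_add_sub_cancel]
    _ ≤ ∑ i, |(S *ᵥ (u - v)) i| + ∑ i, |((S - T) *ᵥ v) i| := by
        rw [← sum_add_distrib]; exact sum_le_sum fun i _ => abs_add_le _ _
    _ ≤ colNorm S * ∑ i, |(u - v) i| + colNorm (S - T) * ∑ i, |v i| :=
        add_le_add (sum_abs_mulVec_le S _) (sum_abs_mulVec_le _ v)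
    _ ≤ ∑ i, |u i - v i| + colNorm (S - T) * ∑ i, |v i| := by
        gcongr
        simpa using mul_le_of_le_one_left (sum_nonneg fun i _ => abs_nonneg ((u - v) i))
          (colNorm_le_one_of_mem_colStochastic hS)

theorem euler_exp_iterates_isProbVec_and_sum_abs_sub_le (n : ℕ) (A : ℕ → Matrix Y Y ℝ)
    (hA : ∀ k < n, IsRateMatrix (A k)) (hA1 : ∀ k < n, colNorm (A k) ≤ 1)
    (u v : ℕ → Y → ℝ) (hu0 : IsProbVec (u 0)) (hv0 : v 0 = u 0)
    (hu : ∀ k < n, u (k + 1) = (1 + A k) *ᵥ u k)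
    (hv : ∀ k < n, v (k + 1) = exp (A k) *ᵥ v k) :
    ∀ k ≤ n, (IsProbVec (u k) ∧ IsProbVec (v k)) ∧
      ∑ i, |u k i - v k i| ≤ ∑ j ∈ range k, colNorm (A j) ^ 2 := by
  intro k
  induction k with
  | zero => simp [hv0, hu0]
  | succ k ih =>
    intro hk
    obtain ⟨⟨huk, hvk⟩, herr⟩ := ih (by omega)
    have hS := (hA k hk).one_add_mem_colStochastic (hA1 k hk)
    refine ⟨⟨hu k hk ▸ huk.mulVec hS,
      hv k hk ▸ hvk.mulVec (hA k hk).exp_mem_colStochastic⟩, ?_⟩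
    calc ∑ i, |u (k + 1) i - v (k + 1) i|
        ≤ ∑ i, |u k i - v k i| + colNorm (1 + A k - exp (A k)) * ∑ i, |v k i| := by
          rw [hu k hk, hv k hk]; exact sum_abs_mulVec_sub_mulVec_le hS _ _ _
      _ ≤ ∑ j ∈ range (k + 1), colNorm (A j) ^ 2 := by
          rw [hvk.sum_abs, mul_one, sum_range_succ]
          exact add_le_add herr (colNorm_one_add_sub_exp_le (hA1 k hk))

end Iterates

/-- Accumulated discretization error between the Euler sampler
`μ_k = (I + hM_k)·μ_{k-1}` and the exponential-integrator sampler
`μ_k = exp(hM_k)·μ_{k-1}`: all iterates are probability vectors and the total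
variation distance after `n` steps is at most `∑_{k=1}^n (h‖M_k‖₁)²`. -/
theorem euler_vs_exponential_integrator {Y : Type*} [Fintype Y] [DecidableEq Y]
    [Nonempty Y] (n : ℕ) (M : ℕ → Matrix Y Y ℝ)
    (hoff : ∀ k, 1 ≤ k → k ≤ n → ∀ y y' : Y, y ≠ y' → 0 ≤ M k y y')
    (hcol : ∀ k, 1 ≤ k → k ≤ n → ∀ y' : Y, ∑ y, M k y y' = 0)
    (h : ℝ) (hh : 0 < h)
    (hnorm : ∀ k, 1 ≤ k → k ≤ n → h * colNorm (M k) ≤ 1)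
    (μ0 : Y → ℝ) (hμ0 : IsProbVec μ0)
    (μEu μEI : ℕ → Y → ℝ)
    (hEu0 : μEu 0 = μ0) (hEI0 : μEI 0 = μ0)
    (hEu : ∀ k, 1 ≤ k → k ≤ n →
      μEu k = ((1 : Matrix Y Y ℝ) + h • M k) *ᵥ μEu (k - 1))
    (hEI : ∀ k, 1 ≤ k → k ≤ n →
      μEI k = NormedSpace.exp (h • M k) *ᵥ μEI (k - 1)) :
    (∀ k ≤ n, IsProbVec (μEu k) ∧ IsProbVec (μEI k)) ∧
    (1 / 2) * ∑ y, |μEu n y - μEI n y|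
      ≤ ∑ k ∈ Finset.Icc 1 n, (h * colNorm (M k)) ^ 2 := by
  have hnorm_smul (k : ℕ) : colNorm (h • M k) = h * colNorm (M k) := by
    rw [colNorm_smul, abs_of_pos hh]
  have hiter := euler_exp_iterates_isProbVec_and_sum_abs_sub_le n (fun k => h • M (k + 1))
    (fun k hk => IsRateMatrix.smul ⟨hoff _ (by omega) hk, hcol _ (by omega) hk⟩ hh.le)
    (fun k hk => (hnorm_smul _).trans_le (hnorm _ (by omega) hk)) μEu μEI (hEu0 ▸ hμ0)
    (hEI0.trans hEu0.symm) (fun k hk => hEu (k + 1) (by omega) hk)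
    (fun k hk => hEI (k + 1) (by omega) hk)
  refine ⟨fun k hk => (hiter k hk).1, ?_⟩
  have herr := (hiter n le_rfl).2
  rw [range_eq_Ico, sum_Ico_add' (fun k => colNorm (h • M k) ^ 2), zero_add,
    ← Order.succ_eq_add_one, Ico_succ_right_eq_Icc] at herr
  simp only [hnorm_smul] at herr
  linarith [sum_nonneg fun y (_ : y ∈ univ) => abs_nonneg (μEu n y - μEI n y)]
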